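/- Let R be a commutative ring. (1) R has stable range at most 1 if and only if every upper triangular unimodular 2×2 matrix [[a,b],[0,d]] over R admits a simple extension whose (2,3) entry is -1, i.e., there exist f, s, t ∈ R such that the 3×3 matrix [[a,b,f],[0,d,-1],[-t,s,0]] has determinant 1. (2) R has stable range 1.5 if and only if every upper triangular unimodular 2×2 matrix [[a,b],[0,d]] over R with a ≠ 0 admits such a simple extension with (2,3) entry -1. (3) R has almost stable range 1 if and only if every upper triangular unimodular 2×2 matrix [[a,b],[0,d]] over R with a not in the Jacobson radical of R admits such a simple extension with (2,3) entry -1. -/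

import Mathlib

/-!
Expanding the determinant, `[[a,b],[0,d]]` has a simple extension with `(2,3)` entry `-1`
exactly when `a` and `b + d f` are coprime for some `f`, while unimodularity of the matrix says
that `(a, b, d)` is unimodular. So each of the three conditions asks for the reduction
`(b, d) ↦ b + d f` to produce an element coprime to `a`; modulo `a` this is stable range one for
`R ⧸ (a)`. Stable range 1.5 is literally this condition for `a ≠ 0`. Stable range one of `R` is
inherited by its quotients and recovered from `a = 0`. For almost stable range one, a unimodular
pair of `R ⧸ I` with `I ⊄ J(R)` lifts to a unimodular triple `(e, b, d)` with `e ∈ I \ J(R)`.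
-/

open Matrix

/-- A `2 × 2` matrix is unimodular if its four entries generate the unit ideal. -/
def Unimodular2 {R : Type*} [CommRing R] (A : Matrix (Fin 2) (Fin 2) R) : Prop :=
  Ideal.span {A 0 0, A 0 1, A 1 0, A 1 1} = ⊤

/-- `R` has stable range at most 1. -/
def StableRange1 (R : Type*) [CommRing R] : Prop :=
  ∀ a b : R, Ideal.span {a, b} = ⊤ → ∃ r : R, IsUnit (a + b * r)

/-- `R` has stable range 1.5. -/
def StableRange15 (R : Type*) [CommRing R] : Prop :=
  ∀ a b c : R, Ideal.span {a, b, c} = ⊤ → c ≠ 0 →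
    ∃ r : R, Ideal.span {a + b * r, c} = ⊤

/-- `R` has almost stable range 1. -/
def AlmostStableRange1 (R : Type*) [CommRing R] : Prop :=
  ∀ I : Ideal R, ¬ I ≤ Ideal.jacobson (⊥ : Ideal R) →
    ∀ a b : R ⧸ I, Ideal.span {a, b} = ⊤ → ∃ r : R ⧸ I, IsUnit (a + b * r)

/-- The upper triangular matrix `[[a,b],[0,d]]` admits a simple extension whose `(2,3)`
entry is `-1`. -/
def HasSimpleExtensionEntryNegOne {R : Type*} [CommRing R] (a b d : R) : Prop :=
  ∃ f s t : R, (!![a, b, f; 0, d, -1; -t, s, 0] : Matrix (Fin 3) (Fin 3) R).det = 1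

open Ideal

section

variable {R : Type*} [CommRing R]

theorem span_pair_eq_top_iff_isCoprime {a b : R} : span {a, b} = ⊤ ↔ IsCoprime a b := by
  rw [span_insert, sup_eq_top_iff_isCoprime]

theorem span_triple_eq_top_iff {a b c : R} :
    span {a, b, c} = ⊤ ↔ ∃ x y z : R, x * a + y * b + z * c = 1 := by
  rw [eq_top_iff_one]
  exact Submodule.mem_span_triple

theorem span_image_mk_eq_top_iff (I : Ideal R) (s : Set R) :
    span (Ideal.Quotient.mk I '' s) = ⊤ ↔ span s ⊔ I = ⊤ := by
  rw [← map_span, eq_top_iff_one, eq_top_iff_one, ← map_one (Ideal.Quotient.mk I),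
    mem_quotient_iff_mem_sup]

theorem isUnit_mk_span_singleton_iff {a c : R} :
    IsUnit (Ideal.Quotient.mk (span {a}) c) ↔ IsCoprime a c := by
  rw [← span_singleton_eq_top, ← Set.image_singleton, span_image_mk_eq_top_iff, sup_comm,
    sup_eq_top_iff_isCoprime]

theorem exists_add_mem_eq_one_of_span_mk_pair_eq_top {I : Ideal R} {b d : R}
    (h : span {Ideal.Quotient.mk I b, Ideal.Quotient.mk I d} = ⊤) :
    ∃ x y : R, ∃ i ∈ I, x * b + y * d + i = 1 := by
  rw [← Set.image_pair, span_image_mk_eq_top_iff, eq_top_iff_one, Submodule.mem_sup] at h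
  obtain ⟨_, hbd, i, hi, h⟩ := h
  obtain ⟨x, y, rfl⟩ := mem_span_pair.mp hbd
  exact ⟨x, y, i, hi, h⟩

theorem unimodular2_upperTriangular_iff {a b d : R} :
    Unimodular2 !![a, b; 0, d] ↔ span {a, b, d} = ⊤ := by
  have hentries : ({a, b, 0, d} : Set R) = insert 0 {a, b, d} := by
    rw [Set.insert_comm b 0, Set.insert_comm a 0]
  simp only [Unimodular2, of_apply, cons_val', cons_val_zero, cons_val_one, empty_val',
    cons_val_fin_one]
  rw [hentries, span_insert_zero]

theorem det_simpleExtension (a b d f s t : R) :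
    (!![a, b, f; 0, d, -1; -t, s, 0] : Matrix (Fin 3) (Fin 3) R).det =
      s * a + t * (b + d * f) := by
  simp only [det_fin_three, of_apply, cons_val', cons_val_zero, cons_val_fin_one, cons_val_one,
    cons_val, mul_zero, mul_neg, mul_one, neg_mul, sub_neg_eq_add, zero_add, sub_zero, neg_neg,
    zero_mul, add_zero]
  ring

theorem hasSimpleExtensionEntryNegOne_iff {a b d : R} :
    HasSimpleExtensionEntryNegOne a b d ↔ ∃ f, IsCoprime a (b + d * f) := by
  simp only [HasSimpleExtensionEntryNegOne, det_simpleExtension, IsCoprime]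

theorem StableRange1.quotient (h : StableRange1 R) (I : Ideal R) : StableRange1 (R ⧸ I) := by
  intro b' d' hbd
  obtain ⟨b, rfl⟩ := Ideal.Quotient.mk_surjective b'
  obtain ⟨d, rfl⟩ := Ideal.Quotient.mk_surjective d'
  obtain ⟨x, y, i, hi, hxyi⟩ := exists_add_mem_eq_one_of_span_mk_pair_eq_top hbd
  obtain ⟨r, hr⟩ := h b (y * d + i)
    (span_pair_eq_top_iff_isCoprime.mpr ⟨x, 1, by linear_combination hxyi⟩)
  refine ⟨Ideal.Quotient.mk I (y * r), ?_⟩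
  convert hr.map (Ideal.Quotient.mk I) using 1
  simp only [map_mul, map_add, Ideal.Quotient.eq_zero_iff_mem.mpr hi, add_zero, add_right_inj]
  ring

theorem exists_isCoprime_add_mul_of_stableRange1_quotient {a b d : R}
    (h : StableRange1 (R ⧸ span {a})) (habd : span {a, b, d} = ⊤) :
    ∃ f, IsCoprime a (b + d * f) := by
  rw [span_insert, sup_comm, ← span_image_mk_eq_top_iff, Set.image_pair] at habd
  obtain ⟨r, hr⟩ := h _ _ habd
  obtain ⟨f, rfl⟩ := Ideal.Quotient.mk_surjective r
  exact ⟨f, isUnit_mk_span_singleton_iff.mp (by simpa using hr)⟩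

theorem exists_mem_notMem_jacobson_span_triple_eq_top {I : Ideal R} (hI : ¬I ≤ jacobson ⊥)
    {b d : R} (hbd : span {Ideal.Quotient.mk I b, Ideal.Quotient.mk I d} = ⊤) :
    ∃ e ∈ I, e ∉ jacobson ⊥ ∧ span {e, b, d} = ⊤ := by
  obtain ⟨x, y, i, hi, hxyi⟩ := exists_add_mem_eq_one_of_span_mk_pair_eq_top hbd
  by_cases hiJ : i ∈ jacobson ⊥
  · -- `x * b + y * d = 1 - i` is a unit, so any `a ∈ I \ J(R)` will do
    obtain ⟨a, haI, haJ⟩ := SetLike.not_le_iff_exists.mp hI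
    obtain ⟨u, hu⟩ := (mem_jacobson_bot.mp hiJ (-1)).exists_right_inv
    refine ⟨a, haI, haJ, span_triple_eq_top_iff.mpr ⟨0, u * x, u * y, ?_⟩⟩
    linear_combination hu + u * hxyi
  · exact ⟨i, hi, hiJ, span_triple_eq_top_iff.mpr ⟨1, x, y, by linear_combination hxyi⟩⟩

theorem stableRange1_iff_exists_isCoprime :
    StableRange1 R ↔ ∀ a b d : R, span {a, b, d} = ⊤ → ∃ f, IsCoprime a (b + d * f) := by
  refine ⟨fun h a b d ↦ exists_isCoprime_add_mul_of_stableRange1_quotient (h.quotient _),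
    fun h b d hbd ↦ ?_⟩
  obtain ⟨f, hf⟩ := h 0 b d (by rwa [span_insert_zero])
  exact ⟨f, isCoprime_zero_left.mp hf⟩

theorem stableRange15_iff_exists_isCoprime :
    StableRange15 R ↔
      ∀ a b d : R, span {a, b, d} = ⊤ → a ≠ 0 → ∃ f, IsCoprime a (b + d * f) := by
  have hperm (a b d : R) : span {b, d, a} = span {a, b, d} := by
    rw [Set.pair_comm d a, Set.insert_comm b a]
  constructor
  · intro h a b d habd ha
    obtain ⟨f, hf⟩ := h b d a (by rwa [hperm]) ha
    exact ⟨f, (span_pair_eq_top_iff_isCoprime.mp hf).symm⟩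
  · intro h b d a hbda ha
    obtain ⟨f, hf⟩ := h a b d (by rwa [← hperm]) ha
    exact ⟨f, span_pair_eq_top_iff_isCoprime.mpr hf.symm⟩

theorem almostStableRange1_iff_exists_isCoprime :
    AlmostStableRange1 R ↔
      ∀ a b d : R, span {a, b, d} = ⊤ → a ∉ jacobson ⊥ → ∃ f, IsCoprime a (b + d * f) := by
  constructor
  · intro h a b d habd ha
    have hspan : ¬span {a} ≤ jacobson ⊥ := fun hle ↦ ha (hle (mem_span_singleton_self a))
    exact exists_isCoprime_add_mul_of_stableRange1_quotient (h _ hspan) habd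
  · intro h I hI b' d' hbd
    obtain ⟨b, rfl⟩ := Ideal.Quotient.mk_surjective b'
    obtain ⟨d, rfl⟩ := Ideal.Quotient.mk_surjective d'
    obtain ⟨e, heI, heJ, hebd⟩ := exists_mem_notMem_jacobson_span_triple_eq_top hI hbd
    obtain ⟨f, hf⟩ := h e b d hebd heJ
    refine ⟨Ideal.Quotient.mk I f, isCoprime_zero_left.mp ?_⟩
    simpa [Ideal.Quotient.eq_zero_iff_mem.mpr heI] using hf.map (Ideal.Quotient.mk I)

end

theorem stmt14 (R : Type*) [CommRing R] :
    (StableRange1 R ↔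
      ∀ a b d : R, Unimodular2 !![a, b; 0, d] → HasSimpleExtensionEntryNegOne a b d) ∧
    (StableRange15 R ↔
      ∀ a b d : R, Unimodular2 !![a, b; 0, d] → a ≠ 0 → HasSimpleExtensionEntryNegOne a b d) ∧
    (AlmostStableRange1 R ↔
      ∀ a b d : R, Unimodular2 !![a, b; 0, d] → a ∉ Ideal.jacobson (⊥ : Ideal R) →
        HasSimpleExtensionEntryNegOne a b d) := by
  simp only [unimodular2_upperTriangular_iff, hasSimpleExtensionEntryNegOne_iff]
  exact ⟨stableRange1_iff_exists_isCoprime, stableRange15_iff_exists_isCoprime,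
    almostStableRange1_iff_exists_isCoprime⟩
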